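/- Let Δ be a positive integer, p an odd prime with p ∤ Δ, a ∈ ℤ with p ∣ a²Δ + 1, and let c ∈ ℤ_p with c² = −Δ. Then the set of elements h of R(1) ⊆ ℍ[ℚ,−Δ,p] such that the lower-left entry of φ(h) is 0 (h viewed in ℍ[ℚ_p,−Δ,p]) equals the ℤ-submodule spanned by e₁ and e = −2aΔ·e₂ − 2·e₃ + p·e₄; in particular this intersection ⋂ₙ R(pⁿ) of the chain of Eichler orders is a ℤ-module of rank 2. -/

import Mathlib

open Quaternion

/-- The coefficient-wise inclusion `ℍ[ℚ, -Δ, p] → ℍ[ℚ_p, -Δ, p]`. -/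
noncomputable def toLoc (p : ℕ) [Fact p.Prime] (Δ : ℕ) :
    ℍ[ℚ, -(Δ : ℚ), (p : ℚ)] → ℍ[ℚ_[p], -(Δ : ℚ_[p]), (p : ℚ_[p])] := fun h =>
  ⟨(h.re : ℚ_[p]), (h.imI : ℚ_[p]), (h.imJ : ℚ_[p]), (h.imK : ℚ_[p])⟩

/-- The `ℚ_p`-linear map `φ : ℍ[ℚ_p, -Δ, p] → M₂(ℚ_p)` sending `α + βi + γj + δk` to
`!![α − βc, γ − δc; γp + δpc, α + βc]`, where `c² = −Δ` in `ℤ_p`. -/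
noncomputable def phi (p : ℕ) [Fact p.Prime] (Δ : ℕ) (c : ℤ_[p]) :
    ℍ[ℚ_[p], -(Δ : ℚ_[p]), (p : ℚ_[p])] → Matrix (Fin 2) (Fin 2) ℚ_[p] := fun h =>
  !![h.re - h.imI * (c : ℚ_[p]), h.imJ - h.imK * (c : ℚ_[p]);
     h.imJ * (p : ℚ_[p]) + h.imK * (p : ℚ_[p]) * (c : ℚ_[p]), h.re + h.imI * (c : ℚ_[p])]

/-- Hashimoto's maximal order `R(1)` in `ℍ[ℚ, -Δ, p]`. -/
def R1 (Δ p : ℕ) (a : ℤ) : Submodule ℤ ℍ[ℚ, -(Δ : ℚ), (p : ℚ)] :=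
  Submodule.span ℤ
    {(1 : ℍ[ℚ, -(Δ : ℚ), (p : ℚ)]), ⟨1/2, 0, 1/2, 0⟩, ⟨0, 1/2, 0, 1/2⟩,
      ⟨0, 0, (a : ℚ) * Δ / p, 1 / (p : ℚ)⟩}

/-- The element `e = −2aΔ·e₂ − 2·e₃ + p·e₄` of `R(1)`. -/
def eElt (Δ p : ℕ) (a : ℤ) : ℍ[ℚ, -(Δ : ℚ), (p : ℚ)] :=
  (-(2 * a * Δ)) • (⟨1/2, 0, 1/2, 0⟩ : ℍ[ℚ, -(Δ : ℚ), (p : ℚ)]) +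
    (-2 : ℤ) • (⟨0, 1/2, 0, 1/2⟩ : ℍ[ℚ, -(Δ : ℚ), (p : ℚ)]) +
    (p : ℤ) • (⟨0, 0, (a : ℚ) * Δ / p, 1 / (p : ℚ)⟩ : ℍ[ℚ, -(Δ : ℚ), (p : ℚ)])

lemma eElt_eq (Δ p : ℕ) [Fact p.Prime] (a : ℤ) :
    eElt Δ p a = (⟨-((a:ℚ)*Δ), -1, 0, 0⟩ : ℍ[ℚ, -(Δ : ℚ), (p : ℚ)]) := by
  have hp : (p:ℚ) ≠ 0 := Nat.cast_ne_zero.2 (Fact.out : p.Prime).ne_zero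
  unfold eElt
  ext <;> simp <;> field_simp <;> ring

lemma mem_R1_iff (Δ p : ℕ) (a : ℤ) (h : ℍ[ℚ, -(Δ : ℚ), (p : ℚ)]) :
    h ∈ R1 Δ p a ↔ ∃ x1 x2 x3 x4 : ℤ,
      h = x1 • (1 : ℍ[ℚ, -(Δ : ℚ), (p : ℚ)]) + x2 • (⟨1/2, 0, 1/2, 0⟩ : ℍ[ℚ, -(Δ : ℚ), (p : ℚ)])
        + x3 • (⟨0, 1/2, 0, 1/2⟩ : ℍ[ℚ, -(Δ : ℚ), (p : ℚ)])
        + x4 • (⟨0, 0, (a : ℚ) * Δ / p, 1 / (p : ℚ)⟩ : ℍ[ℚ, -(Δ : ℚ), (p : ℚ)]) := by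
  rw [R1, Submodule.mem_span_insert]
  constructor
  · rintro ⟨x1, z, hz, rfl⟩
    rw [Submodule.mem_span_insert] at hz
    obtain ⟨x2, z2, hz2, rfl⟩ := hz
    rw [Submodule.mem_span_pair] at hz2
    obtain ⟨x3, x4, rfl⟩ := hz2
    exact ⟨x1, x2, x3, x4, by abel⟩
  · rintro ⟨x1, x2, x3, x4, rfl⟩
    refine ⟨x1, _, Submodule.mem_span_insert.2 ⟨x2, _,
      Submodule.mem_span_pair.2 ⟨x3, x4, rfl⟩, rfl⟩, by abel⟩

lemma key (Δ : ℕ) (hΔ : 0 < Δ) (p : ℕ) [Fact p.Prime] (c : ℤ_[p])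
    (hc : c ^ 2 = -(Δ : ℤ_[p])) (q r : ℚ)
    (h : (q : ℚ_[p]) + (r : ℚ_[p]) * (c : ℚ_[p]) = 0) : q = 0 ∧ r = 0 := by
  have hc' : ((c : ℚ_[p])) ^ 2 = -(Δ : ℚ_[p]) := by
    have := congrArg (fun x : ℤ_[p] => (x : ℚ_[p])) hc
    push_cast at this ⊢
    exact this
  by_cases hr : r = 0
  · subst hr
    simp at h
    exact ⟨by exact_mod_cast h, rfl⟩
  · exfalso
    have hrp : (r : ℚ_[p]) ≠ 0 := by exact_mod_cast hr
    have hcq : (c : ℚ_[p]) = ((-q/r : ℚ) : ℚ_[p]) := by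
      push_cast
      field_simp at h ⊢
      linear_combination h
    have : ((-q/r : ℚ) : ℚ_[p]) ^ 2 = ((-(Δ:ℚ) : ℚ) : ℚ_[p]) := by
      rw [← hcq, hc']; push_cast; ring
    have h2 : (-q/r : ℚ) ^ 2 = -(Δ:ℚ) := by exact_mod_cast this
    have : (0:ℚ) < Δ := by exact_mod_cast hΔ
    nlinarith [sq_nonneg (-q/r : ℚ)]

lemma cond_iff (Δ : ℕ) (hΔ : 0 < Δ) (p : ℕ) [Fact p.Prime] (c : ℤ_[p])
    (hc : c ^ 2 = -(Δ : ℤ_[p])) (h : ℍ[ℚ, -(Δ : ℚ), (p : ℚ)]) :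
    phi p Δ c (toLoc p Δ h) 1 0 = 0 ↔ h.imJ = 0 ∧ h.imK = 0 := by
  have hp : ((p:ℚ_[p])) ≠ 0 := Nat.cast_ne_zero.2 (Fact.out : p.Prime).ne_zero
  simp only [phi, toLoc, Matrix.cons_val', Matrix.cons_val_zero, Matrix.cons_val_one,
    Matrix.head_cons, Matrix.empty_val', Matrix.cons_val_fin_one, Matrix.head_fin_const,
    Matrix.of_apply]
  constructor
  · intro h0
    have h1 : (h.imJ : ℚ_[p]) + (h.imK : ℚ_[p]) * c = 0 := by
      apply mul_left_cancel₀ hp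
      rw [mul_zero]
      linear_combination h0
    exact key Δ hΔ p c hc _ _ h1
  · rintro ⟨hJ, hK⟩
    rw [hJ, hK]
    push_cast
    ring

/-- The elements of `R(1)` whose image under `φ` has vanishing lower-left entry form the
`ℤ`-span of `e₁` and `e = −2aΔ·e₂ − 2·e₃ + p·e₄`, a `ℤ`-module of rank `2`
(the intersection `⋂ₙ R(pⁿ)`). -/
theorem stmt_18 (Δ : ℕ) (hΔ : 0 < Δ)
    (p : ℕ) [Fact p.Prime] (hp2 : p ≠ 2) (hpΔ : ¬ p ∣ Δ)
    (a : ℤ) (ha : (p : ℤ) ∣ a ^ 2 * Δ + 1)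
    (c : ℤ_[p]) (hc : c ^ 2 = -(Δ : ℤ_[p])) :
    {h : ℍ[ℚ, -(Δ : ℚ), (p : ℚ)] | h ∈ R1 Δ p a ∧ phi p Δ c (toLoc p Δ h) 1 0 = 0} =
      (Submodule.span ℤ {(1 : ℍ[ℚ, -(Δ : ℚ), (p : ℚ)]), eElt Δ p a} :
        Set ℍ[ℚ, -(Δ : ℚ), (p : ℚ)]) ∧
    Module.finrank ℤ
      ↥(Submodule.span ℤ {(1 : ℍ[ℚ, -(Δ : ℚ), (p : ℚ)]), eElt Δ p a}) = 2 := by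
  have hprime : p.Prime := Fact.out
  have hpq : (p:ℚ) ≠ 0 := Nat.cast_ne_zero.2 hprime.ne_zero
  have hpz : (p:ℤ) ≠ 0 := Int.natCast_ne_zero.2 hprime.ne_zero
  constructor
  · ext h
    simp only [Set.mem_setOf_eq, SetLike.mem_coe]
    rw [cond_iff Δ hΔ p c hc, mem_R1_iff, Submodule.mem_span_pair]
    constructor
    · rintro ⟨⟨x1, x2, x3, x4, rfl⟩, hJ, hK⟩
      simp only [QuaternionAlgebra.imJ_add, QuaternionAlgebra.imK_add,
        QuaternionAlgebra.imJ_smul, QuaternionAlgebra.imK_smul] at hJ hK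
      simp at hJ hK
      field_simp at hJ hK
      have hJ' : x2 * (p:ℤ) + x4 * (a * Δ) * 2 = 0 := by
        have h' : ((x2 * (p:ℤ) + x4 * (a * Δ) * 2 : ℤ) : ℚ) = 0 := by push_cast; linear_combination hJ
        exact_mod_cast h'
      have hK' : x3 * (p:ℤ) + x4 * 2 = 0 := by
        have h' : ((x3 * (p:ℤ) + x4 * 2 : ℤ) : ℚ) = 0 := by push_cast; linear_combination hK
        exact_mod_cast h'
      have hdvd : (p:ℤ) ∣ x4 * 2 := ⟨-x3, by linarith⟩
      have hpint : Prime (p:ℤ) := Nat.prime_iff_prime_int.1 hprime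
      have hpx4 : (p:ℤ) ∣ x4 := by
        rcases hpint.dvd_mul.1 hdvd with h' | h'
        · exact h'
        · exfalso
          have : p ∣ 2 := by exact_mod_cast h'
          exact hp2 ((Nat.prime_dvd_prime_iff_eq hprime Nat.prime_two).1 this)
      obtain ⟨t, ht⟩ := hpx4
      have hx3 : x3 = -2 * t := by
        have h0 : (p:ℤ) * x3 = (p:ℤ) * (-2 * t) := by rw [ht] at hK'; linarith
        exact mul_left_cancel₀ hpz h0
      have hx2 : x2 = -(2 * a * Δ) * t := by
        have h0 : (p:ℤ) * x2 = (p:ℤ) * (-(2 * a * Δ) * t) := by rw [ht] at hJ'; linarith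
        exact mul_left_cancel₀ hpz h0
      subst hx2 hx3 ht
      exact ⟨x1, t, by unfold eElt; module⟩
    · rintro ⟨m, n, rfl⟩
      refine ⟨⟨m, -(2 * a * Δ) * n, -2 * n, (p:ℤ) * n, by unfold eElt; module⟩, ?_, ?_⟩ <;>
        rw [eElt_eq] <;> simp
  · have hrange : ({(1 : ℍ[ℚ, -(Δ : ℚ), (p : ℚ)]), eElt Δ p a} : Set _) =
        Set.range ![(1 : ℍ[ℚ, -(Δ : ℚ), (p : ℚ)]), eElt Δ p a] := by
      ext x; simp [Fin.exists_fin_two]; tauto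
    rw [hrange, finrank_span_eq_card]
    · simp
    · rw [LinearIndependent.pair_iff]
      intro s t hst
      rw [eElt_eq] at hst
      have hI := congrArg QuaternionAlgebra.imI hst
      have hre := congrArg QuaternionAlgebra.re hst
      simp at hI hre
      constructor
      · have : (s:ℚ) = 0 := by
          have ht : (t:ℚ) = 0 := by exact_mod_cast hI
          rw [ht] at hre; simpa using hre
        exact_mod_cast this
      · exact_mod_cast hI
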